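/- arXiv:2411.11963 — 2 statements merged into one kernel-verified Lean document; each statement's English description precedes it below -/
import Mathlib

section
/- Let 𝔤 be a Lie algebra over a ℚ-algebra which is 3-step nilpotent, i.e. all quadruple nested brackets vanish: ⁅w, ⁅x, ⁅y, z⁆⁆⁆ = 0 for all w, x, y, z. Then the Dynkin product x * y := x + y + (1/2)⁅x,y⁆ + (1/12)⁅x,⁅x,y⁆⁆ + (1/12)⁅y,⁅y,x⁆⁆ defines a group structure on 𝔤, with identity 0 and inverse −x. (This is the group law used to integrate the hidden M-algebra, whose trilinear bracket [Q,[Q,Q]] is nonzero but [−,[−,[Q,Q]]] vanishes.) -/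
/-- Truncated Dynkin/Hausdorff product for a 3-step nilpotent Lie algebra over ℚ:
`x * y := x + y + (1/2)⁅x,y⁆ + (1/12)⁅x,⁅x,y⁆⁆ + (1/12)⁅y,⁅y,x⁆⁆` is a group law
with identity `0` and inverse `-x`. -/
theorem stmt5 (L : Type*) [LieRing L] [LieAlgebra ℚ L]
    (h3 : ∀ w x y z : L, ⁅w, ⁅x, ⁅y, z⁆⁆⁆ = 0) :
    ∃ G : Group L,
      (∀ x y : L, G.mul x y
        = x + y + ((2 : ℚ)⁻¹) • ⁅x, y⁆
          + ((12 : ℚ)⁻¹) • ⁅x, ⁅x, y⁆⁆ + ((12 : ℚ)⁻¹) • ⁅y, ⁅y, x⁆⁆) ∧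
      G.one = (0 : L) ∧
      (∀ x : L, G.inv x = -x) := by
  have h4a : ∀ w a b c : L, ⁅w, ⁅⁅a, b⁆, c⁆⁆ = 0 := by
    intro w a b c
    rw [lie_lie, lie_sub, h3, h3, sub_zero]
  have h4b : ∀ w a b c : L, ⁅⁅w, a⁆, ⁅b, c⁆⁆ = 0 := by
    intro w a b c
    rw [lie_lie, h3, h3, sub_zero]
  set m : L → L → L := fun a b => a + b + ((2 : ℚ)⁻¹) • ⁅a, b⁆
      + ((12 : ℚ)⁻¹) • ⁅a, ⁅a, b⁆⁆ + ((12 : ℚ)⁻¹) • ⁅b, ⁅b, a⁆⁆ with hm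
  have massoc : ∀ x y z : L, m (m x y) z = m x (m y z) := by
    intro x y z
    simp only [m, lie_add, add_lie, lie_smul, smul_lie, lie_sub, sub_lie, lie_neg, neg_lie,
      h3, h4a, h4b, smul_zero, add_zero, zero_add, sub_zero, zero_sub, lie_zero, zero_lie,
      neg_zero, neg_neg, smul_neg, lie_lie]
    have skew0 : ⁅y, x⁆ = -⁅x, y⁆ := (lie_skew y x).symm
    have skew1 : ⁅y, ⁅z, x⁆⁆ = -⁅y, ⁅x, z⁆⁆ := by rw [← lie_skew z x, lie_neg]
    have jac : ⁅x, ⁅y, z⁆⁆ = ⁅y, ⁅x, z⁆⁆ - ⁅z, ⁅x, y⁆⁆ := by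
      rw [leibniz_lie x y z, ← lie_skew z ⁅x, y⁆]; abel
    rw [skew0, skew1, jac]
    simp only [lie_neg, smul_neg, lie_sub, smul_sub]
    module
  refine ⟨{ mul := m, one := 0, inv := fun a => -a,
            mul_assoc := massoc,
            one_mul := ?_, mul_one := ?_, inv_mul_cancel := ?_ },
          fun x y => rfl, rfl, fun x => rfl⟩
  · intro a
    show m 0 a = a
    simp [m]
  · intro a
    show m a 0 = a
    simp [m]
  · intro a
    show m (-a) a = 0
    simp [m]
end

section
/- Fix s ∈ ℝ with s ≠ 0 and set δ = 2(1+s), γ₁ = 1, γ₂ = 2(1/120 + s/720). Then the system of linear equations in real unknowns (α₀, α₁, α₂, α₃, α₄, β₁, β₂, β₃): (1) −α₀ + δβ₁ = 1/2; (2) −2α₀ + 2γ₁β₁ + 2δβ₂ = 0; (3) −3α₁ − 4γ₁β₂ = 0; (4) 2α₂ + 10γ₂β₂ + 10γ₁β₃ = 0; (5) α₂ + 600γ₂β₃ = 0; (6) 2α₃ + (γ₂/120)β₁ + (δ/120)β₃ = 0; (7) α₃ + γ₂β₃ = 0; (8) 3α₄ − (200/120)γ₂β₃ = 0; (9) β₁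 + 10β₂ − 720β₃ = 0; has the unique solution α₀ = −(1/10)(6 + 2s + s²)/s², α₁ = (1/30)(6+2s)/s², α₂ = (1/1440)(6+s)²/s², α₃ = (6+s)²/(2·5·120·720·s²), α₄ = −(6+s)²/(2·9·120·720·s²), β₁ = −(1/10)(3−2s)/s², β₂ = −(1/20)(3+s)/s², β₃ = −(3/7200)(6+s)/s². -/
/-- Unique solution of the linear system determining the coefficients of the
"decomposed" M-theory 3-form on the hidden M-algebra, for parameter `s ≠ 0`
with `δ = 2(1+s)`, `γ₁ = 1`, `γ₂ = 2(1/120 + s/720)`. -/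
theorem stmt7 (s : ℝ) (hs : s ≠ 0)
    (α₀ α₁ α₂ α₃ α₄ β₁ β₂ β₃ : ℝ) :
    (-α₀ + (2 * (1 + s)) * β₁ = 1 / 2 ∧
     -2 * α₀ + 2 * 1 * β₁ + 2 * (2 * (1 + s)) * β₂ = 0 ∧
     -3 * α₁ - 4 * 1 * β₂ = 0 ∧
     2 * α₂ + 10 * (2 * (1 / 120 + s / 720)) * β₂ + 10 * 1 * β₃ = 0 ∧
     α₂ + 600 * (2 * (1 / 120 + s / 720)) * β₃ = 0 ∧
     2 * α₃ + ((2 * (1 / 120 + s / 720)) / 120) * β₁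
       + ((2 * (1 + s)) / 120) * β₃ = 0 ∧
     α₃ + (2 * (1 / 120 + s / 720)) * β₃ = 0 ∧
     3 * α₄ - (200 / 120) * (2 * (1 / 120 + s / 720)) * β₃ = 0 ∧
     β₁ + 10 * β₂ - 720 * β₃ = 0)
    ↔ (α₀ = -(1 / 10) * (6 + 2 * s + s ^ 2) / s ^ 2 ∧
       α₁ = (1 / 30) * (6 + 2 * s) / s ^ 2 ∧
       α₂ = (1 / 1440) * (6 + s) ^ 2 / s ^ 2 ∧
       α₃ = (6 + s) ^ 2 / (2 * 5 * 120 * 720 * s ^ 2) ∧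
       α₄ = -(6 + s) ^ 2 / (2 * 9 * 120 * 720 * s ^ 2) ∧
       β₁ = -(1 / 10) * (3 - 2 * s) / s ^ 2 ∧
       β₂ = -(1 / 20) * (3 + s) / s ^ 2 ∧
       β₃ = -(3 / 7200) * (6 + s) / s ^ 2) := by
  constructor
  · rintro ⟨h1, h2, h3, h4, h5, h6, h7, h8, h9⟩
    refine ⟨?_, ?_, ?_, ?_, ?_, ?_, ?_, ?_⟩
    · rw [eq_div_iff (pow_ne_zero 2 hs)]
      linear_combination ((-6/5) + (-2/5)*s + (-1/5)*s^2) * h1 + ((3/5) + (1/5)*s + (-2/5)*s^2) * h2 + ((8928/5) + (-1584/5)*s + (288/5)*s^2) * h4 + ((-17856/5) + (3168/5)*s + (-576/5)*s^2) * h5 + ((224640) + (-17280)*s + (17280)*s^2) * h6 + ((-449280) + (34560)*s + (-34560)*s^2) * h7 + ((-30)) * h9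
    · rw [eq_div_iff (pow_ne_zero 2 hs)]
      linear_combination ((2/5) + (2/15)*s) * h1 + ((-1/5) + (-1/15)*s) * h2 + ((-1/3)*s^2) * h3 + ((1344/5) + (-192/5)*s) * h4 + ((-2688/5) + (384/5)*s) * h5 + ((28800) + (-11520)*s) * h6 + ((-57600) + (23040)*s) * h7 + ((-22/5)) * h9
    · rw [eq_div_iff (pow_ne_zero 2 hs)]
      linear_combination ((1/20) + (1/60)*s + (1/720)*s^2) * h1 + ((-1/40) + (-1/120)*s + (-1/1440)*s^2) * h2 + ((3/5) + (7/10)*s + (1/10)*s^2) * h4 + ((-6/5) + (-7/5)*s + (4/5)*s^2) * h5 + ((-360) + (-780)*s + (-120)*s^2) * h6 + ((720) + (1560)*s + (240)*s^2) * h7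
    · rw [eq_div_iff (mul_ne_zero (by norm_num) (pow_ne_zero 2 hs))]
      linear_combination ((72) + (24)*s + (2)*s^2) * h1 + ((-36) + (-12)*s + (-1)*s^2) * h2 + ((864) + (1008)*s + (144)*s^2) * h4 + ((-1728) + (-2016)*s + (-288)*s^2) * h5 + ((-518400) + (-1123200)*s + (-172800)*s^2) * h6 + ((1036800) + (2246400)*s + (1209600)*s^2) * h7
    · rw [eq_div_iff (mul_ne_zero (by norm_num) (pow_ne_zero 2 hs))]
      linear_combination ((-72) + (-24)*s + (-2)*s^2) * h1 + ((36) + (12)*s + (1)*s^2) * h2 + ((-864) + (-1008)*s + (-144)*s^2) * h4 + ((1728) + (2016)*s + (288)*s^2) * h5 + ((518400) + (1123200)*s + (172800)*s^2) * h6 + ((-1036800) + (-2246400)*s + (-345600)*s^2) * h7 + ((518400)*s^2) * h8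
    · rw [eq_div_iff (pow_ne_zero 2 hs)]
      linear_combination ((-3/5) + (2/5)*s) * h1 + ((3/10) + (-1/5)*s) * h2 + ((-936/5) + (144/5)*s) * h4 + ((1872/5) + (-288/5)*s) * h5 + ((-17280) + (8640)*s) * h6 + ((34560) + (-17280)*s) * h7 + ((3)) * h9
    · rw [eq_div_iff (pow_ne_zero 2 hs)]
      linear_combination ((-3/10) + (-1/10)*s) * h1 + ((3/20) + (1/20)*s) * h2 + ((-1008/5) + (144/5)*s) * h4 + ((2016/5) + (-288/5)*s) * h5 + ((-21600) + (8640)*s) * h6 + ((43200) + (-17280)*s) * h7 + ((33/10)) * h9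
    · rw [eq_div_iff (pow_ne_zero 2 hs)]
      linear_combination ((-1/200) + (-1/1200)*s) * h1 + ((1/400) + (1/2400)*s) * h2 + ((-3/50) + (-3/50)*s) * h4 + ((3/25) + (3/25)*s) * h5 + ((36) + (72)*s) * h6 + ((-72) + (-144)*s) * h7
  · rintro ⟨e0, e1, e2, e3, e4, e5, e6, e7⟩
    subst e0 e1 e2 e3 e4 e5 e6 e7
    refine ⟨?_, ?_, ?_, ?_, ?_, ?_, ?_, ?_, ?_⟩ <;>
      field_simp <;> ring
end
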